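/- Fix a prime p and b(x) ∈ 𝔽_p(x), and let Δ: 𝔽_p(x) → 𝔽_p(x) be given by Δ(f) = f' + b(x)·f. The equation y' + b(x)·y = 0 has a nonzero solution in 𝔽_p(x) if and only if Δ^p = 0. -/

import Mathlib

/-!
Writing `g = A / B ^ p` with `B ^ p` a constant shows that the `p`-th iterate of the derivative
kills every rational function in characteristic `p`, because the coefficients of `A^{(p)}` carry
the factor `p!`. If `f ≠ 0` solves `f' + b f = 0`, then `Δ (h f) = h' f`, so `Δ ^ p (h f) =
h^{(p)} f = 0` for every `h`. Conversely, if `Δ ^ p 1 = 0`, the last nonzero vector among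
`1, Δ 1, Δ² 1, …` is a nonzero solution.
-/

open Polynomial

/-- Formal derivative of a rational function, via the quotient rule on the
canonical numerator/denominator representation. -/
noncomputable def rderiv {F : Type*} [Field F] (f : RatFunc F) : RatFunc F :=
  algebraMap (Polynomial F) (RatFunc F)
      (Polynomial.derivative f.num * f.denom - f.num * Polynomial.derivative f.denom) /
    algebraMap (Polynomial F) (RatFunc F) (f.denom ^ 2)

theorem Function.exists_ne_zero_apply_eq_zero_of_iterate_eq_zero {α : Type*} [Zero α]
    (T : α → α) {x : α} (hx : x ≠ 0) {n : ℕ} (hn : T^[n] x = 0) : ∃ y, y ≠ 0 ∧ T y = 0 := by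
  induction n generalizing x with
  | zero => exact absurd hn hx
  | succ n ih =>
    by_cases hTx : T x = 0
    · exact ⟨x, hx, hTx⟩
    · exact ih hTx hn

theorem Polynomial.iterate_derivative_eq_zero_of_charP {R : Type*} [CommSemiring R]
    (p : ℕ) [CharP R p] (hp : p ≠ 0) (A : R[X]) : derivative^[p] A = 0 := by
  ext m
  have hdvd : p ∣ (m + p).descFactorial p :=
    (Nat.dvd_factorial (Nat.pos_of_ne_zero hp) le_rfl).trans (Nat.factorial_dvd_descFactorial _ _)
  rw [coeff_iterate_derivative, coeff_zero, nsmul_eq_mul,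
    (CharP.cast_eq_zero_iff R p _).mpr hdvd, zero_mul]

section rderiv

variable {F : Type*} [Field F]

local notation "↑ₚ" => algebraMap F[X] (RatFunc F)

theorem rderiv_div_algebraMap (u : F[X]) {v : F[X]} (hv : v ≠ 0) :
    rderiv (↑ₚ u / ↑ₚ v) = ↑ₚ (derivative u * v - u * derivative v) / ↑ₚ (v ^ 2) := by
  set f := ↑ₚ u / ↑ₚ v
  have hd : f.denom ≠ 0 := f.denom_ne_zero
  have hkey : f.num * v = u * f.denom := (RatFunc.num_mul_eq_mul_denom_iff hv).mpr rfl
  have hkey' : derivative f.num * v + f.num * derivative v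
      = derivative u * f.denom + u * derivative f.denom := by
    simpa only [derivative_mul] using congrArg derivative hkey
  rw [rderiv, div_eq_div_iff (RatFunc.algebraMap_ne_zero (pow_ne_zero 2 hd))
    (RatFunc.algebraMap_ne_zero (pow_ne_zero 2 hv)), ← map_mul, ← map_mul]
  congr 1
  linear_combination (f.denom * v) * hkey' -
    (derivative f.denom * v + derivative v * f.denom) * hkey

theorem rderiv_mul (f g : RatFunc F) : rderiv (f * g) = rderiv f * g + f * rderiv g := by
  rw [← f.num_div_denom, ← g.num_div_denom, div_mul_div_comm, ← map_mul, ← map_mul,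
    rderiv_div_algebraMap _ (mul_ne_zero f.denom_ne_zero g.denom_ne_zero),
    rderiv_div_algebraMap _ f.denom_ne_zero, rderiv_div_algebraMap _ g.denom_ne_zero]
  have h1 : ↑ₚ f.denom ≠ 0 := RatFunc.algebraMap_ne_zero f.denom_ne_zero
  have h2 : ↑ₚ g.denom ≠ 0 := RatFunc.algebraMap_ne_zero g.denom_ne_zero
  field_simp
  simp only [map_mul, map_pow, map_sub, map_add, derivative_mul]
  ring

theorem iterate_rderiv_div_algebraMap_of_derivative_eq_zero (u : F[X]) {v : F[X]} (hv : v ≠ 0)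
    (hv' : derivative v = 0) (k : ℕ) :
    rderiv^[k] (↑ₚ u / ↑ₚ v) = ↑ₚ (derivative^[k] u) / ↑ₚ v := by
  induction k with
  | zero => rfl
  | succ k ih =>
    have hv₀ : ↑ₚ v ≠ 0 := RatFunc.algebraMap_ne_zero hv
    rw [Function.iterate_succ_apply', ih, rderiv_div_algebraMap _ hv, hv',
      Function.iterate_succ_apply']
    rw [mul_zero, sub_zero, map_mul, map_pow]
    field_simp

theorem iterate_rderiv_eq_zero_of_charP (p : ℕ) [CharP F p] (hp : p ≠ 0) (g : RatFunc F) :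
    rderiv^[p] g = 0 := by
  have hg : g = ↑ₚ (g.num * g.denom ^ (p - 1)) / ↑ₚ (g.denom ^ p) := by
    rw [← RatFunc.num_mul_eq_mul_denom_iff (pow_ne_zero p g.denom_ne_zero), mul_assoc,
      ← pow_succ, Nat.sub_add_cancel (Nat.pos_of_ne_zero hp)]
  have hderiv : derivative (g.denom ^ p) = 0 := by simp [derivative_pow]
  rw [hg, iterate_rderiv_div_algebraMap_of_derivative_eq_zero _ (pow_ne_zero p g.denom_ne_zero)
    hderiv, iterate_derivative_eq_zero_of_charP p hp, map_zero, zero_div]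

theorem iterate_rderiv_add_mul_mul_of_rderiv_add_mul_eq_zero {b f : RatFunc F}
    (hf : rderiv f + b * f = 0) (k : ℕ) (h : RatFunc F) :
    (fun g => rderiv g + b * g)^[k] (h * f) = rderiv^[k] h * f := by
  induction k with
  | zero => rfl
  | succ k ih =>
    rw [Function.iterate_succ_apply', ih, Function.iterate_succ_apply', rderiv_mul]
    linear_combination (rderiv^[k] h) * hf

end rderiv

/-- **Cartier's lemma in order 1**: for a prime `p` and `b(x) ∈ 𝔽_p(x)`, with
`Δ : f ↦ f' + b·f`, the equation `y' + b(x)y = 0` has a nonzero solution in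
`𝔽_p(x)` if and only if the `p`-curvature `Δ^p` is identically zero. -/
theorem order_one_rational_solution_iff_pCurvature_zero
    (p : ℕ) [Fact p.Prime] (b : RatFunc (ZMod p)) :
    (∃ f : RatFunc (ZMod p), f ≠ 0 ∧ rderiv f + b * f = 0) ↔
      ∀ f : RatFunc (ZMod p),
        (fun g : RatFunc (ZMod p) => rderiv g + b * g)^[p] f = 0 := by
  constructor
  · rintro ⟨f, hf0, hf⟩ g
    have := iterate_rderiv_add_mul_mul_of_rderiv_add_mul_eq_zero hf p (g / f)
    rwa [div_mul_cancel₀ g hf0,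
      iterate_rderiv_eq_zero_of_charP p (Fact.out : p.Prime).ne_zero, zero_mul] at this
  · intro h
    exact Function.exists_ne_zero_apply_eq_zero_of_iterate_eq_zero _ one_ne_zero (h 1)
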